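/- Each vertex of a graph belongs to at most one 'large cluster' over the entire run of a recursion that never recurses into large clusters; consequently, the total number of star edges added (one per vertex of each large cluster, connecting it to the cluster center) over all recursive calls is at most n. -/
import Mathlib


/-- In a recursion whose level-`ℓ` clusters are pairwise disjoint, where large clusters are
never recursed on (each cluster at level `ℓ+1` is contained in some non-large cluster at
level `ℓ`), every vertex belongs to at most one large cluster over the whole run; hence the
total number of star edges (one per vertex of each large cluster) is at most `n`. -/
theorem stmt18 {V : Type*} [Fintype V] [DecidableEq V] (L : ℕ)
    (clusters : ℕ → Finset (Finset V)) (large : ℕ → Finset (Finset V))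
    (hlarge : ∀ ℓ, large ℓ ⊆ clusters ℓ)
    (hdisj : ∀ ℓ, ((clusters ℓ : Set (Finset V))).PairwiseDisjoint id)
    (hrefine : ∀ ℓ, ∀ C ∈ clusters (ℓ + 1), ∃ D ∈ clusters ℓ \ large ℓ, C ⊆ D) :
    (∀ v : V, ∀ ℓ₁ ℓ₂ : ℕ, ∀ C₁ ∈ large ℓ₁, ∀ C₂ ∈ large ℓ₂,
        v ∈ C₁ → v ∈ C₂ → ℓ₁ = ℓ₂ ∧ C₁ = C₂) ∧
    ∑ ℓ ∈ Finset.range L, ∑ C ∈ large ℓ, C.card ≤ Fintype.card V := by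
  -- chain refinement across multiple levels
  have chain : ∀ k ℓ, ∀ C ∈ clusters (ℓ + k + 1), ∃ D ∈ clusters ℓ \ large ℓ, C ⊆ D := by
    intro k
    induction k with
    | zero => intro ℓ C hC; exact hrefine ℓ C hC
    | succ k ih =>
      intro ℓ C hC
      have hC' : C ∈ clusters ((ℓ + 1) + k + 1) := by
        have : ℓ + (k + 1) + 1 = (ℓ + 1) + k + 1 := by ring
        rwa [this] at hC
      obtain ⟨D, hD, hCD⟩ := ih (ℓ + 1) C hC'
      rw [Finset.mem_sdiff] at hD
      obtain ⟨E, hE, hDE⟩ := hrefine ℓ D hD.1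
      exact ⟨E, hE, hCD.trans hDE⟩
  have uniq : ∀ v : V, ∀ ℓ₁ ℓ₂ : ℕ, ∀ C₁ ∈ large ℓ₁, ∀ C₂ ∈ large ℓ₂,
      v ∈ C₁ → v ∈ C₂ → ℓ₁ = ℓ₂ ∧ C₁ = C₂ := by
    have key : ∀ v : V, ∀ ℓ₁ ℓ₂ : ℕ, ℓ₁ < ℓ₂ → ∀ C₁ ∈ large ℓ₁, ∀ C₂ ∈ large ℓ₂,
        v ∈ C₁ → v ∈ C₂ → False := by
      intro v ℓ₁ ℓ₂ hlt C₁ h₁ C₂ h₂ hv₁ hv₂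
      obtain ⟨k, rfl⟩ : ∃ k, ℓ₂ = ℓ₁ + k + 1 := ⟨ℓ₂ - ℓ₁ - 1, by omega⟩
      obtain ⟨D, hD, hCD⟩ := chain k ℓ₁ C₂ (hlarge _ h₂)
      rw [Finset.mem_sdiff] at hD
      have hne : C₁ ≠ D := by rintro rfl; exact hD.2 h₁
      have := hdisj ℓ₁ (Finset.mem_coe.mpr (hlarge _ h₁)) (Finset.mem_coe.mpr hD.1) hne
      exact Finset.disjoint_left.mp this hv₁ (hCD hv₂)
    intro v ℓ₁ ℓ₂ C₁ h₁ C₂ h₂ hv₁ hv₂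
    rcases lt_trichotomy ℓ₁ ℓ₂ with h | h | h
    · exact absurd (key v ℓ₁ ℓ₂ h C₁ h₁ C₂ h₂ hv₁ hv₂) (by simp)
    · subst h
      refine ⟨rfl, ?_⟩
      by_contra hne
      have := hdisj ℓ₁ (Finset.mem_coe.mpr (hlarge _ h₁)) (Finset.mem_coe.mpr (hlarge _ h₂)) hne
      exact Finset.disjoint_left.mp this hv₁ hv₂
    · exact absurd (key v ℓ₂ ℓ₁ h C₂ h₂ C₁ h₁ hv₂ hv₁) (by simp)
  refine ⟨uniq, ?_⟩
  have hsig : ∑ ℓ ∈ Finset.range L, ∑ C ∈ large ℓ, C.card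
      = ∑ p ∈ (Finset.range L).sigma large, p.2.card := by
    rw [Finset.sum_sigma]
  rw [hsig]
  have hdj : ∀ p ∈ (Finset.range L).sigma large, ∀ q ∈ (Finset.range L).sigma large,
      p ≠ q → Disjoint (p.2) (q.2) := by
    rintro ⟨ℓ₁, C₁⟩ hp ⟨ℓ₂, C₂⟩ hq hne
    rw [Finset.mem_sigma] at hp hq
    rw [Finset.disjoint_left]
    intro v hv₁ hv₂
    obtain ⟨rfl, rfl⟩ := uniq v ℓ₁ ℓ₂ C₁ hp.2 C₂ hq.2 hv₁ hv₂
    exact hne rfl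
  calc ∑ p ∈ (Finset.range L).sigma large, p.2.card
      = (((Finset.range L).sigma large).biUnion (fun p => p.2)).card :=
        (Finset.card_biUnion hdj).symm
    _ ≤ Fintype.card V := Finset.card_le_card (Finset.subset_univ _) |>.trans_eq
        (Finset.card_univ)
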